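/- arXiv:2207.04035 — 2 statements merged into one kernel-verified Lean document; each statement's English description precedes it below -/
import Mathlib

section
/- For every finite connected simple graph G on n vertices and every k ∈ ℕ with k(k+1)/2 ≥ n − 1, the burning number satisfies b(G) ≤ k + 2. -/
open SimpleGraph Finset
open scoped Classical

/-- The burning number of a simple graph `G` on a finite vertex type: the least `k`
such that there are vertices `v_1, …, v_k` with every vertex within graph distance
`i - 1` of `v_i` for some `i` (with 0-based indexing, within distance `i` of `v i`). -/
noncomputable def burningNumber {V : Type*} [Fintype V] (G : SimpleGraph V) : ℕ :=
  sInf {k : ℕ | ∃ v : Fin k → V, ∀ u : V, ∃ i : Fin k, G.dist (v i) u ≤ (i : ℕ)}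

variable {V : Type} [Fintype V] {G : SimpleGraph V}

private lemma boundary_of_walk {S : Set V} {a b : V} (p : G.Walk a b)
    (ha : a ∈ S) (hb : b ∉ S) : ∃ x y, G.Adj x y ∧ x ∈ S ∧ y ∉ S := by
  induction p with
  | nil => exact absurd ha hb
  | @cons a c b h p ih =>
    by_cases hc : c ∈ S
    · exact ih hc hb
    · exact ⟨_, _, h, ha, hc⟩

private lemma getVert_dist (hG : G.Connected) {a b : V} (w : G.Walk a b) (p j : ℕ) :
    G.dist (w.getVert p) (w.getVert (p + j)) ≤ j := by
  induction j with
  | zero => simp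
  | succ j ih =>
    have h1 : G.dist (w.getVert (p + j)) (w.getVert (p + (j + 1))) ≤ 1 := by
      by_cases h : p + j < w.length
      · have := w.adj_getVert_succ h
        rw [← dist_eq_one_iff_adj] at this
        exact le_of_eq this
      · rw [w.getVert_of_length_le (by omega), w.getVert_of_length_le (by omega)]
        simp [SimpleGraph.dist_self]
    calc G.dist (w.getVert p) (w.getVert (p + (j + 1)))
        ≤ G.dist (w.getVert p) (w.getVert (p + j))
          + G.dist (w.getVert (p + j)) (w.getVert (p + (j + 1))) := hG.dist_triangle
      _ ≤ j + 1 := by omega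

private lemma exists_spanning_walk_aux (hG : G.Connected) (v0 : V) :
    ∀ (n : ℕ) (w : G.Walk v0 v0), (Finset.univ.filter (· ∉ w.support)).card ≤ n →
    ∃ w' : G.Walk v0 v0, (∀ u, u ∈ w'.support) ∧ w'.length ≤ w.length + 2 * n := by
  intro n
  induction n with
  | zero =>
    intro w hw
    refine ⟨w, fun u => ?_, by omega⟩
    by_contra h
    have h2 : u ∈ Finset.univ.filter (· ∉ w.support) := by simp [h]
    rw [Finset.card_eq_zero.mp (Nat.le_zero.mp hw)] at h2
    simp at h2
  | succ n ih =>
    intro w hw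
    by_cases hall : ∀ u, u ∈ w.support
    · exact ⟨w, hall, by omega⟩
    push_neg at hall
    obtain ⟨z, hz⟩ := hall
    obtain ⟨x, y, hxy, hxS, hyS⟩ := boundary_of_walk (S := {u | u ∈ w.support})
      ((hG.preconnected v0 z).some) w.start_mem_support hz
    rw [Set.mem_setOf_eq] at hxS hyS
    set w' : G.Walk v0 v0 :=
      (w.takeUntil x hxS).append (Walk.cons hxy (Walk.cons hxy.symm (w.dropUntil x hxS))) with hw'
    have hsupp : ∀ u, u ∈ w.support ∨ u = y → u ∈ w'.support := by
      intro u hu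
      rw [hw', Walk.mem_support_append_iff]
      rcases hu with hu | rfl
      · rw [← w.take_spec hxS, Walk.mem_support_append_iff] at hu
        rcases hu with hu | hu
        · exact Or.inl hu
        · right; simp only [Walk.support_cons, List.mem_cons]; tauto
      · right; simp [Walk.support_cons]
    have hlen : w'.length = w.length + 2 := by
      have h3 := congrArg Walk.length (w.take_spec hxS)
      rw [Walk.length_append] at h3
      rw [hw', Walk.length_append, Walk.length_cons, Walk.length_cons]
      omega
    have hcard : (Finset.univ.filter (· ∉ w'.support)).card ≤ n := by
      have hsub : Finset.univ.filter (· ∉ w'.support) ⊆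
          (Finset.univ.filter (· ∉ w.support)).erase y := by
        intro u hu
        simp only [Finset.mem_filter, Finset.mem_erase, Finset.mem_univ, true_and] at hu ⊢
        exact ⟨fun h => hu (hsupp u (Or.inr h)), fun h => hu (hsupp u (Or.inl h))⟩
      have hy : y ∈ Finset.univ.filter (· ∉ w.support) := by
        simp only [Finset.mem_filter, Finset.mem_univ, true_and]; exact hyS
      have h4 := Finset.card_erase_of_mem hy
      have h5 := Finset.card_le_card hsub
      omega
    obtain ⟨w'', h1, h2⟩ := ih w' hcard
    exact ⟨w'', h1, by omega⟩

/-- If `G` is a connected graph on `n` vertices and `k (k + 1) / 2 ≥ n - 1`, then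
`b(G) ≤ k + 2`. -/
theorem burningNumber_le_of_triangular {V : Type} [Fintype V]
    (G : SimpleGraph V) (hG : G.Connected) (k : ℕ)
    (hk : Fintype.card V - 1 ≤ k * (k + 1) / 2) :
    burningNumber G ≤ k + 2 := by
  have hne : Nonempty V := hG.nonempty
  obtain ⟨v0⟩ := hne
  obtain ⟨w, hw1, hw2⟩ := exists_spanning_walk_aux hG v0 (Fintype.card V - 1)
    (Walk.nil) (by
      have : (Finset.univ.filter (· ∉ (Walk.nil : G.Walk v0 v0).support)) ⊆
          Finset.univ.erase v0 := by
        intro u hu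
        simp only [Finset.mem_filter, Walk.support_nil, List.mem_singleton,
          Finset.mem_erase, Finset.mem_univ, and_true, true_and] at hu ⊢
        exact hu
      have h5 := Finset.card_le_card this
      have h6 := Finset.card_erase_of_mem (Finset.mem_univ v0)
      simp only [Finset.card_univ] at h6
      omega)
  simp only [Walk.length_nil, zero_add] at hw2
  -- w.length ≤ 2 * (card V - 1) ≤ k * (k+1)
  have hlen : w.length ≤ k * (k + 1) := by
    have h7 : k * (k + 1) / 2 * 2 ≤ k * (k + 1) := Nat.div_mul_le_self _ _
    omega
  apply Nat.sInf_le
  refine ⟨fun i => w.getVert (min w.length ((i : ℕ) * (i : ℕ) + (i : ℕ))), fun u => ?_⟩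
  obtain ⟨q, hq2, hq1⟩ := Walk.mem_support_iff_exists_getVert.mp (hw1 u)
  set i := Nat.sqrt q with hi
  clear_value i
  have hii : i * i ≤ q := by rw [hi]; simpa [Nat.pow_two] using Nat.sqrt_le' q
  have hqi : q < (i + 1) * (i + 1) := by rw [hi]; simpa [Nat.pow_two] using Nat.lt_succ_sqrt' q
  have hik : i < k + 2 := by
    have h8 : q < (k + 1) ^ 2 := by nlinarith [hlen, hq1]
    have := Nat.sqrt_lt'.mpr h8
    omega
  refine ⟨⟨i, hik⟩, ?_⟩
  show G.dist (w.getVert (min w.length (i * i + i))) u ≤ i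
  have hp : ∀ a b : ℕ, a ≤ b → G.dist (w.getVert a) (w.getVert b) ≤ b - a := by
    intro a b hab
    have := getVert_dist hG w a (b - a)
    rwa [Nat.add_sub_cancel' hab] at this
  rw [← hq2]
  have hq3 : q ≤ i * i + 2 * i := by nlinarith [hqi]
  rcases le_or_gt (i * i + i) w.length with hc | hc
  · rw [min_eq_right hc]
    rcases le_or_gt (i * i + i) q with h | h
    · have := hp _ _ h
      omega
    · have := hp _ _ (le_of_lt h)
      rw [SimpleGraph.dist_comm] at this
      omega
  · rw [min_eq_left (le_of_lt hc)]
    have := hp _ _ hq1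
    rw [SimpleGraph.dist_comm] at this
    omega
end

section
/- Every finite connected simple graph G on n ≥ 1 vertices satisfies b(G) ≤ ⌈√(2n)⌉ + 2. -/
open SimpleGraph

/-- Walks avoiding a set lift to reachability in the induced graph. -/
private lemma reach_induce {V : Type} (G : SimpleGraph V) (s : Set V) :
    ∀ {a b : V} (p : G.Walk a b), (∀ x ∈ p.support, x ∈ s) →
      ∀ (ha : a ∈ s) (hb : b ∈ s), (G.induce s).Reachable ⟨a, ha⟩ ⟨b, hb⟩ := by
  intro a b p
  induction p with
  | nil => intro _ ha hb; rfl
  | cons h q ih =>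
    intro hs ha hb
    have hc : ∀ x ∈ q.support, x ∈ s := fun x hx => hs x (by simp [hx])
    have h1 : (G.induce s).Adj ⟨_, ha⟩ ⟨_, hc _ q.start_mem_support⟩ := by
      rw [comap_adj]; exact h
    exact h1.reachable.trans (ih hc _ hb)

/-- Every connected graph on `n` vertices has a lazy walk visiting all vertices
by time `2*(n-1)`. -/
private lemma exists_lazy_tour : ∀ (n : ℕ) (V : Type) [Fintype V] (G : SimpleGraph V),
    Fintype.card V = n → G.Connected →
    ∃ f : ℕ → V, (∀ i, f (i + 1) = f i ∨ G.Adj (f i) (f (i + 1))) ∧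
      ∀ v : V, ∃ p ≤ 2 * (n - 1), f p = v := by
  intro n
  induction n using Nat.strong_induction_on with
  | _ n ih =>
    intro V _ G hcard hG
    classical
    obtain ⟨u⟩ := hG.nonempty
    by_cases hn1 : n ≤ 1
    · -- single vertex
      refine ⟨fun _ => u, fun i => Or.inl rfl, fun v => ⟨0, by omega, ?_⟩⟩
      have : Fintype.card V ≤ 1 := by omega
      exact (Fintype.card_le_one_iff.mp this _ _)
    · push_neg at hn1
      -- pick v maximizing dist u
      obtain ⟨v, -, hv⟩ := Finset.exists_max_image Finset.univ (G.dist u)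
        ⟨u, Finset.mem_univ u⟩
      have hv : ∀ w : V, G.dist u w ≤ G.dist u v := fun w => hv w (Finset.mem_univ w)
      have hvu : v ≠ u := by
        obtain ⟨w, hw⟩ := Fintype.exists_ne_of_one_lt_card (by omega) u
        intro h
        have h1 : G.dist u w ≠ 0 := by
          intro h0; rw [hG.dist_eq_zero_iff] at h0; exact hw h0.symm
        have := hv w
        rw [h, SimpleGraph.dist_self] at this
        omega
      have hdistuv : 1 ≤ G.dist u v := by
        have : G.dist u v ≠ 0 := by
          intro h0; rw [hG.dist_eq_zero_iff] at h0; exact hvu h0.symm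
        omega
      set s : Set V := {x | x ≠ v} with hs
      -- shortest walks from u avoid v
      have avoid : ∀ w : V, w ≠ v → ∃ p : G.Walk u w, ∀ x ∈ p.support, x ∈ s := by
        intro w hw
        obtain ⟨p, hp⟩ := hG.exists_walk_length_eq_dist u w
        refine ⟨p, fun x hxs hxv => ?_⟩
        subst hxv
        have h1 : G.dist u x ≤ (p.takeUntil x hxs).length := G.dist_le _
        have h2 : (p.takeUntil x hxs).length + (p.dropUntil x hxs).length = p.length := by
          rw [← SimpleGraph.Walk.length_append, SimpleGraph.Walk.take_spec]
        have h3 : G.dist u w ≤ G.dist u x := hv w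
        have h4 : (p.dropUntil x hxs).length = 0 := by omega
        exact hw (SimpleGraph.Walk.eq_of_length_eq_zero h4).symm
      have hus : u ∈ s := hvu.symm
      have hG' : (G.induce s).Connected := by
        rw [connected_iff]
        have ra : ∀ (w : ↥s), (G.induce s).Reachable ⟨u, hus⟩ w := by
          rintro ⟨w, hw⟩
          obtain ⟨p, hp⟩ := avoid w hw
          exact reach_induce G s p hp _ _
        exact ⟨fun a b => (ra a).symm.trans (ra b), ⟨⟨u, hus⟩⟩⟩
      have hcard' : Fintype.card ↥s = n - 1 := by
        have h1 : Fintype.card ↥s = Fintype.card {x : V // ¬ x = v} :=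
          Fintype.card_congr (Equiv.subtypeEquivRight (by simp [hs]))
        rw [h1, Fintype.card_subtype_compl, Fintype.card_subtype_eq, hcard]
      obtain ⟨f', hstep', hcov'⟩ := ih (n - 1) (by omega) ↥s (G.induce s) hcard' hG'
      obtain ⟨x, hadj, hxs⟩ : ∃ x : V, G.Adj v x ∧ x ∈ s := by
        obtain ⟨p, -⟩ := hG.exists_walk_length_eq_dist v u
        clear hv hdistuv
        cases p with
        | nil => exact absurd rfl hvu
        | cons h q => exact ⟨_, h, Ne.symm h.ne⟩
      obtain ⟨p₀, hp₀, hfp₀⟩ := hcov' ⟨x, hxs⟩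
      refine ⟨fun i => if i ≤ p₀ then (f' i).1 else if i = p₀ + 1 then v
        else (f' (i - 2)).1, ?_, ?_⟩
      · intro i
        dsimp only
        rcases lt_trichotomy i p₀ with hi | hi | hi
        · rw [if_pos (le_of_lt hi), if_pos (Nat.succ_le_of_lt hi)]
          rcases hstep' i with h | h
          · exact Or.inl (congrArg Subtype.val h)
          · exact Or.inr h
        · subst hi
          right
          rw [if_pos le_rfl, if_neg (by omega), if_pos rfl, hfp₀]
          exact hadj.symm
        · rw [if_neg (by omega)]
          by_cases h2 : i = p₀ + 1
          · subst h2
            rw [if_pos rfl, if_neg (by omega), if_neg (by omega)]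
            right
            have he : p₀ + 1 + 1 - 2 = p₀ := by omega
            rw [he, hfp₀]
            exact hadj
          · rw [if_neg h2, if_neg (by omega), if_neg (by omega)]
            have he : i + 1 - 2 = i - 2 + 1 := by omega
            rcases hstep' (i - 2) with h | h
            · exact Or.inl (by rw [he]; exact congrArg Subtype.val h)
            · exact Or.inr (by rw [he]; exact h)
      · intro w
        by_cases hw : w = v
        · exact ⟨p₀ + 1, by omega, by
            dsimp only; rw [if_neg (by omega), if_pos rfl, hw]⟩
        · obtain ⟨q, hq, hfq⟩ := hcov' ⟨w, hw⟩
          by_cases hql : q ≤ p₀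
          · exact ⟨q, by omega, by
              dsimp only; rw [if_pos hql]; exact congrArg Subtype.val hfq⟩
          · refine ⟨q + 2, by omega, ?_⟩
            dsimp only
            rw [if_neg (by omega), if_neg (by omega)]
            have he : q + 2 - 2 = q := by omega
            rw [he]
            exact congrArg Subtype.val hfq

private lemma lazy_dist {V : Type} [Fintype V] {G : SimpleGraph V} (hG : G.Connected)
    {f : ℕ → V} (hf : ∀ i, f (i + 1) = f i ∨ G.Adj (f i) (f (i + 1))) :
    ∀ a b : ℕ, G.dist (f a) (f b) ≤ max a b - min a b := by
  have key : ∀ a j : ℕ, G.dist (f a) (f (a + j)) ≤ j := by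
    intro a j
    induction j with
    | zero => simp
    | succ j ihj =>
      have h1 : G.dist (f (a + j)) (f (a + j + 1)) ≤ 1 := by
        rcases hf (a + j) with h | h
        · rw [h, SimpleGraph.dist_self]; omega
        · exact le_trans (G.dist_le h.toWalk) (by simp)
      calc G.dist (f a) (f (a + (j + 1)))
          ≤ G.dist (f a) (f (a + j)) + G.dist (f (a + j)) (f (a + j + 1)) := by
            rw [show a + (j + 1) = a + j + 1 by ring]; exact hG.dist_triangle
        _ ≤ j + 1 := add_le_add ihj h1
  intro a b
  rcases le_total a b with h | h
  · have h2 := key a (b - a)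
    rw [Nat.add_sub_cancel' h] at h2
    simpa [Nat.max_eq_right h, Nat.min_eq_left h] using h2
  · have h2 := key b (a - b)
    rw [Nat.add_sub_cancel' h, SimpleGraph.dist_comm] at h2
    simpa [Nat.max_eq_left h, Nat.min_eq_right h] using h2

/-- Every connected graph on `n ≥ 1` vertices satisfies `b(G) ≤ ⌈√(2n)⌉ + 2`. -/
theorem burningNumber_le_ceil_sqrt_two_n {V : Type} [Fintype V]
    (G : SimpleGraph V) (hG : G.Connected) (hn : 1 ≤ Fintype.card V) :
    burningNumber G ≤ ⌈Real.sqrt (2 * Fintype.card V)⌉₊ + 2 := by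
  classical
  obtain ⟨f, hstep, hcov⟩ := exists_lazy_tour (Fintype.card V) V G rfl hG
  set n := Fintype.card V with hn'
  set k := ⌈Real.sqrt (2 * (n : ℝ))⌉₊ + 2 with hk
  have hd := lazy_dist hG hstep
  refine Nat.sInf_le ?_
  refine ⟨fun i => f (min ((i : ℕ) * (i : ℕ) + (i : ℕ)) (2 * (n - 1))), fun u => ?_⟩
  obtain ⟨p, hp, hfp⟩ := hcov u
  have hsq1 : Nat.sqrt p * Nat.sqrt p ≤ p := Nat.sqrt_le p
  have hsq2 : p < (Nat.sqrt p + 1) * (Nat.sqrt p + 1) := Nat.lt_succ_sqrt p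
  have hik : Nat.sqrt p < k := by
    have h1 : Nat.sqrt p ≤ Nat.sqrt (2 * n) := Nat.sqrt_le_sqrt (by omega)
    have h2 : (Nat.sqrt (2 * n) : ℝ) ≤ Real.sqrt (2 * (n : ℝ)) := by
      rw [Real.le_sqrt (by positivity) (by positivity)]
      have := Nat.sqrt_le' (2 * n)
      exact_mod_cast this
    have h3 : Nat.sqrt (2 * n) ≤ ⌈Real.sqrt (2 * (n : ℝ))⌉₊ :=
      Nat.cast_le.mp (h2.trans (Nat.le_ceil _))
    omega
  refine ⟨⟨Nat.sqrt p, hik⟩, ?_⟩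
  dsimp only
  have hdd := hd (min (Nat.sqrt p * Nat.sqrt p + Nat.sqrt p) (2 * (n - 1))) p
  rw [hfp] at hdd
  refine le_trans hdd ?_
  set i := Nat.sqrt p with hi
  have hsq2' : p ≤ i * i + 2 * i := by nlinarith
  have hpL : p ≤ 2 * (n - 1) := hp
  generalize hgm : i * i = m at hsq1 hsq2' ⊢
  omega
end
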